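/- arXiv:2206.00557 — 8 statements merged into one kernel-verified Lean document; each statement's English description precedes it below -/
import Mathlib

section
/- For any sequence a_1, ..., a_T of real numbers with 1 ≤ a_s ≤ K for all s (where K ≥ 1), we have ∑_{t=1}^{T} a_t / √(K + ∑_{s<t} a_s) ≤ 2 √(∑_{t=1}^{T} a_t) + √K. -/
lemma sum_div_sqrt_le (a : ℕ → ℝ) :
    ∀ T : ℕ, (∀ s ∈ Finset.Icc 1 T, 0 < a s) →
    ∑ t ∈ Finset.Icc 1 T, a t / Real.sqrt (∑ s ∈ Finset.Icc 1 t, a s) ≤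
      2 * Real.sqrt (∑ t ∈ Finset.Icc 1 T, a t) := by
  intro T
  induction T with
  | zero => simp
  | succ n ih =>
    intro hpos
    have hpos' : ∀ s ∈ Finset.Icc 1 n, 0 < a s := fun s hs => by
      refine hpos s ?_
      simp only [Finset.mem_Icc] at hs ⊢; omega
    have hS : (0:ℝ) ≤ ∑ t ∈ Finset.Icc 1 n, a t :=
      Finset.sum_nonneg fun s hs => (hpos' s hs).le
    have han : 0 < a (n + 1) := hpos _ (by simp)
    rw [Finset.sum_Icc_succ_top (by omega : 1 ≤ n+1), Finset.sum_Icc_succ_top (by omega : 1 ≤ n+1)]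
    set S := ∑ t ∈ Finset.Icc 1 n, a t with hSdef
    have key : a (n+1) / Real.sqrt (S + a (n+1)) ≤
        2 * Real.sqrt (S + a (n+1)) - 2 * Real.sqrt S := by
      have hSa : (0:ℝ) < S + a (n+1) := by linarith
      have hu : Real.sqrt S ^ 2 = S := Real.sq_sqrt hS
      have hv : Real.sqrt (S + a (n+1)) ^ 2 = S + a (n+1) := Real.sq_sqrt hSa.le
      have hvpos : 0 < Real.sqrt (S + a (n+1)) := Real.sqrt_pos.mpr hSa
      have huv : Real.sqrt S ≤ Real.sqrt (S + a (n+1)) :=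
        Real.sqrt_le_sqrt (by linarith)
      rw [div_le_iff₀ hvpos]
      nlinarith [sq_nonneg (Real.sqrt (S + a (n+1)) - Real.sqrt S)]
    calc ∑ t ∈ Finset.Icc 1 n, a t / Real.sqrt (∑ s ∈ Finset.Icc 1 t, a s)
          + a (n+1) / Real.sqrt (S + a (n+1))
        ≤ 2 * Real.sqrt S + a (n+1) / Real.sqrt (S + a (n+1)) := by
          linarith [ih hpos']
      _ ≤ 2 * Real.sqrt (S + a (n+1)) := by linarith

/-- For `a_1, …, a_T ∈ [1, K]` (with `K ≥ 1`),
`∑_{t=1}^T a_t / √(K + ∑_{s<t} a_s) ≤ 2 √(∑_{t=1}^T a_t) + √K`. -/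
theorem sum_div_sqrt_offset_le (T : ℕ) (hT : 1 ≤ T) (K : ℝ) (hK : 1 ≤ K)
    (a : ℕ → ℝ) (ha : ∀ s ∈ Finset.Icc 1 T, 1 ≤ a s ∧ a s ≤ K) :
    ∑ t ∈ Finset.Icc 1 T, a t / Real.sqrt (K + ∑ s ∈ Finset.Ico 1 t, a s) ≤
      2 * Real.sqrt (∑ t ∈ Finset.Icc 1 T, a t) + Real.sqrt K := by
  have hpos : ∀ s ∈ Finset.Icc 1 T, 0 < a s := fun s hs => by linarith [(ha s hs).1]
  have h1 : ∑ t ∈ Finset.Icc 1 T, a t / Real.sqrt (K + ∑ s ∈ Finset.Ico 1 t, a s) ≤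
      ∑ t ∈ Finset.Icc 1 T, a t / Real.sqrt (∑ s ∈ Finset.Icc 1 t, a s) := by
    refine Finset.sum_le_sum fun t ht => ?_
    obtain ⟨ht1, ht2⟩ := Finset.mem_Icc.mp ht
    have hIcc : ∑ s ∈ Finset.Icc 1 t, a s = ∑ s ∈ Finset.Ico 1 t, a s + a t := by
      rw [← Finset.Ico_add_one_right_eq_Icc, Finset.sum_Ico_succ_top ht1]
    have hP : (0:ℝ) ≤ ∑ s ∈ Finset.Ico 1 t, a s := by
      refine Finset.sum_nonneg fun s hs => ?_
      have := hpos s (by simp only [Finset.mem_Ico] at hs; simp only [Finset.mem_Icc]; omega)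
      linarith
    have hat := ha t ht
    have hpos1 : (0:ℝ) < ∑ s ∈ Finset.Icc 1 t, a s := by rw [hIcc]; linarith
    have hle : ∑ s ∈ Finset.Icc 1 t, a s ≤ K + ∑ s ∈ Finset.Ico 1 t, a s := by
      rw [hIcc]; linarith
    have hsq : 0 < Real.sqrt (∑ s ∈ Finset.Icc 1 t, a s) := Real.sqrt_pos.mpr hpos1
    gcongr
    · linarith
  have h2 := sum_div_sqrt_le a T hpos
  have h3 : (0:ℝ) ≤ Real.sqrt K := Real.sqrt_nonneg K
  linarith
end

section
/- For any constant c > e², if t is a positive real number satisfying t ≤ c (ln t)², then t ≤ 25 c (ln c)². -/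
/-- For `c > e²` and `t > 1` with `t ≤ c (ln t)²`, we have `t ≤ 25 c (ln c)²`. -/
theorem le_of_le_mul_log_sq (c t : ℝ) (hc : Real.exp 2 < c) (ht : 1 < t)
    (h : t ≤ c * (Real.log t) ^ 2) :
    t ≤ 25 * c * (Real.log c) ^ 2 := by
  set L := Real.log t with hLdef
  have ht0 : (0:ℝ) < t := by linarith
  have hc0 : (0:ℝ) < c := lt_trans (Real.exp_pos 2) hc
  have hL : 0 < L := Real.log_pos ht
  have hlc : 2 < Real.log c := by
    calc (2:ℝ) = Real.log (Real.exp 2) := (Real.log_exp 2).symm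
    _ < Real.log c := Real.log_lt_log (Real.exp_pos 2) hc
  have he : (2.5:ℝ) < Real.exp 1 := by
    have := Real.exp_one_gt_d9; linarith
  have he0 : (0:ℝ) < Real.exp 1 := Real.exp_pos 1
  -- take logs
  have hlog : L ≤ Real.log c + 2 * Real.log L := by
    have h1 : Real.log t ≤ Real.log (c * L ^ 2) := Real.log_le_log ht0 h
    rw [Real.log_mul (ne_of_gt hc0) (by positivity), Real.log_pow] at h1
    push_cast at h1
    linarith
  -- log L ≤ L / e
  have hLe : Real.log L ≤ L / Real.exp 1 := by
    have h2 : Real.log (L / Real.exp 1) ≤ L / Real.exp 1 - 1 :=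
      Real.log_le_sub_one_of_pos (by positivity)
    rw [Real.log_div (ne_of_gt hL) (ne_of_gt he0), Real.log_exp] at h2
    linarith
  -- L (e - 2) ≤ e log c
  have key : L * (Real.exp 1 - 2) ≤ Real.exp 1 * Real.log c := by
    have : L ≤ Real.log c + 2 * (L / Real.exp 1) := by linarith
    have h3 : L * Real.exp 1 ≤ Real.log c * Real.exp 1 + 2 * L := by
      have := mul_le_mul_of_nonneg_right this (le_of_lt he0)
      field_simp at this ⊢
      linarith
    nlinarith
  have hL5 : L ≤ 5 * Real.log c := by nlinarith
  nlinarith [sq_nonneg (5 * Real.log c - L), mul_pos hc0 hL]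
end

section
/- For any real b ≥ e, the equation x = b ln x (for x ≥ e) has a largest solution x* satisfying x* ≤ b (1 + √(2 ln(b/e)) + ln(b/e)). -/
/-- For `b ≥ e`, any solution `x ≥ e` of `x = b ln x` satisfies
`x ≤ b (1 + √(2 ln(b/e)) + ln(b/e))`. -/
theorem solution_of_eq_log_le (b x : ℝ) (hb : Real.exp 1 ≤ b) (hx : Real.exp 1 ≤ x)
    (heq : x = b * Real.log x) :
    x ≤ b * (1 + Real.sqrt (2 * Real.log (b / Real.exp 1)) + Real.log (b / Real.exp 1)) := by
  have hbpos : (0:ℝ) < b := lt_of_lt_of_le (Real.exp_pos 1) hb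
  have hxpos : (0:ℝ) < x := lt_of_lt_of_le (Real.exp_pos 1) hx
  set c := Real.log (b / Real.exp 1) with hc
  have hc0 : 0 ≤ c := by
    apply Real.log_nonneg
    rw [le_div_iff₀ (Real.exp_pos 1)]
    simpa using hb
  set s := Real.sqrt (2 * c) with hs
  have hs0 : 0 ≤ s := Real.sqrt_nonneg _
  have hs2 : s ^ 2 = 2 * c := Real.sq_sqrt (by linarith)
  have hcb : c = Real.log b - 1 := by
    rw [hc, Real.log_div (ne_of_gt hbpos) (ne_of_gt (Real.exp_pos 1)), Real.log_exp]
  set M := b * (1 + s + c) with hM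
  have h1sc : (1:ℝ) ≤ 1 + s + c := by linarith
  have hMpos : 0 < M := by
    apply mul_pos hbpos; linarith
  have hbM : b ≤ M := by
    calc b = b * 1 := (mul_one b).symm
    _ ≤ M := by apply mul_le_mul_of_nonneg_left h1sc hbpos.le
  -- key: b * log M ≤ M
  have hlogM : Real.log M ≤ 1 + s + c := by
    rw [hM, Real.log_mul (ne_of_gt hbpos) (by linarith)]
    have hexp : 1 + s + c ≤ Real.exp s := by
      have := Real.quadratic_le_exp_of_nonneg hs0
      nlinarith
    have hlog2 : Real.log (1 + s + c) ≤ s := by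
      calc Real.log (1 + s + c) ≤ Real.log (Real.exp s) :=
            Real.log_le_log (by linarith) hexp
      _ = s := Real.log_exp s
    linarith
  have hkey : b * Real.log M ≤ M := by
    rw [hM]
    exact mul_le_mul_of_nonneg_left hlogM hbpos.le
  -- now argue x ≤ M
  by_contra h
  push_neg at h
  have hxM : M < x := h
  have hdivpos : 0 < x / M := div_pos hxpos hMpos
  have hdivne : x / M ≠ 1 := by
    intro habs
    rw [div_eq_one_iff_eq (ne_of_gt hMpos)] at habs
    linarith
  have hlt : Real.log (x / M) < x / M - 1 := Real.log_lt_sub_one_of_pos hdivpos hdivne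
  have hsplit : Real.log x = Real.log M + Real.log (x / M) := by
    rw [Real.log_div (ne_of_gt hxpos) (ne_of_gt hMpos)]; ring
  have h2 : b * (x / M - 1) ≤ x - M := by
    have : b * (x / M - 1) = (b / M) * (x - M) := by field_simp
    rw [this]
    have hb1 : b / M ≤ 1 := (div_le_one hMpos).mpr hbM
    nlinarith [sub_pos.mpr hxM]
  have h3 : b * Real.log (x / M) < b * (x / M - 1) :=
    (mul_lt_mul_iff_right₀ hbpos).mpr hlt
  have : x < M + (x - M) := by
    calc x = b * Real.log x := heq
    _ = b * Real.log M + b * Real.log (x / M) := by rw [hsplit]; ring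
    _ < b * Real.log M + b * (x / M - 1) := by linarith
    _ ≤ M + (x - M) := by linarith
  linarith
end

section
/- Let G = (V, E) be a directed graph with V = {1, ..., K}, and let p be a probability distribution over V with p_i > 0 for all i. Then ∑_{i=1}^{K} p_i / (p_i + ∑_{j ∈ N_in(i)} p_j) ≤ mas(G), where mas(G) is the maximum size of a vertex subset inducing an acyclic subgraph of G. -/
/-!
Greedy removal of closed out-neighbourhoods. Write `r_S(i) = p_i / (p_i + p(N_in(i) ∩ S))`
(`inRatio E p S i`) and `N_out[v] = {v} ∪ {i | E v i}`.
Since `∑_{v ∈ S} p_v ∑_{i ∈ S ∩ N_out[v]} r_S(i) = ∑_{i ∈ S} r_S(i) p(S ∩ N_in[i]) = ∑_{v ∈ S} p_v`,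
some `v ∈ S` has `∑_{i ∈ S ∩ N_out[v]} r_S(i) ≤ 1`. Deleting `S ∩ N_out[v]` from `S` only
increases the remaining ratios, and `v` has no out-neighbour left, so adding `v` to an acyclic
subset of what remains keeps it acyclic. Induction on `S` gives an acyclic `A ⊆ S` with
`∑_{i ∈ S} r_S(i) ≤ |A|`.
-/

/-- `V'` induces an acyclic subgraph of `E`: there is no directed cycle
(ignoring self-loops) among the vertices of `V'`. -/
def InducesAcyclic {V : Type*} (E : V → V → Prop) (V' : Finset V) : Prop :=
  ∀ a : V, ¬ Relation.TransGen (fun x y => x ∈ V' ∧ y ∈ V' ∧ x ≠ y ∧ E x y) a a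

/-- `mas G`: the maximum size of a vertex subset inducing an acyclic subgraph of `G`. -/
noncomputable def mas (V : Type*) [Fintype V] (E : V → V → Prop) : ℕ :=
  sSup {n | ∃ V' : Finset V, InducesAcyclic E V' ∧ V'.card = n}

namespace InducesAcyclic

variable {V : Type*} {E : V → V → Prop}

theorem empty : InducesAcyclic E (∅ : Finset V) := by
  intro a h
  obtain ⟨b, ⟨hb, -⟩, -⟩ := Relation.TransGen.head'_iff.mp h
  simp at hb

theorem insert_of_forall_not_adj [DecidableEq V] {A : Finset V} {v : V}
    (hA : InducesAcyclic E A) (hv : ∀ x ∈ A, ¬ E v x) : InducesAcyclic E (insert v A) := by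
  intro a hcycle
  set R := fun x y => x ∈ insert v A ∧ y ∈ insert v A ∧ x ≠ y ∧ E x y
  have source_mem : ∀ x y, R x y → x ∈ A := by
    rintro x y ⟨hx, hy, hxy, hE⟩
    rcases Finset.mem_insert.mp hx with rfl | hx
    · exact absurd hE (hv y ((Finset.mem_insert.mp hy).resolve_left hxy.symm))
    · exact hx
  have restrict : ∀ x y, Relation.TransGen R x y → y ∈ A →
      Relation.TransGen (fun x y => x ∈ A ∧ y ∈ A ∧ x ≠ y ∧ E x y) x y := by
    intro x y h
    induction h with
    | single hxy => exact fun hy => .single ⟨source_mem _ _ hxy, hy, hxy.2.2⟩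
    | tail _ hbc ih =>
      have hb := source_mem _ _ hbc
      exact fun hc => .tail (ih hb) ⟨hb, hc, hbc.2.2⟩
  obtain ⟨b, hab, -⟩ := Relation.TransGen.head'_iff.mp hcycle
  exact hA a (restrict a a hcycle (source_mem a b hab))

end InducesAcyclic

theorem card_le_mas {V : Type*} [Fintype V] {E : V → V → Prop} {A : Finset V}
    (hA : InducesAcyclic E A) : A.card ≤ mas V E :=
  le_csSup ⟨Fintype.card V, by rintro n ⟨B, -, rfl⟩; exact B.card_le_univ⟩ ⟨A, hA, rfl⟩

section InRatio

variable {V : Type*} [DecidableEq V] (E : V → V → Prop) [DecidableRel E] (p : V → ℝ)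

noncomputable def inRatio (S : Finset V) (i : V) : ℝ :=
  p i / (p i + ∑ j ∈ S.filter (fun j => E j i ∧ j ≠ i), p j)

variable {E p}

theorem inRatio_anti {S T : Finset V} (hST : T ⊆ S) {i : V} (hp : ∀ j, 0 < p j) :
    inRatio E p S i ≤ inRatio E p T i :=
  div_le_div_of_nonneg_left (hp i).le
    (add_pos_of_pos_of_nonneg (hp i) (Finset.sum_nonneg fun j _ => (hp j).le))
    (add_le_add le_rfl (Finset.sum_le_sum_of_subset_of_nonneg (Finset.filter_subset_filter _ hST)
      fun j _ _ => (hp j).le))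

theorem sum_mul_sum_inRatio_closedOut (S : Finset V) (hp : ∀ j, 0 < p j) :
    ∑ v ∈ S, p v * ∑ i ∈ S.filter (fun i => i = v ∨ E v i), inRatio E p S i = ∑ v ∈ S, p v := by
  have closedIn_sum : ∀ i ∈ S, ∑ v ∈ S.filter (fun v => i = v ∨ E v i), p v
      = p i + ∑ j ∈ S.filter (fun j => E j i ∧ j ≠ i), p j := by
    intro i hi
    have self_sum := Finset.sum_ite_eq S i p
    rw [if_pos hi] at self_sum
    rw [Finset.sum_filter, Finset.sum_filter, ← self_sum, ← Finset.sum_add_distrib]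
    refine Finset.sum_congr rfl fun v _ => ?_
    by_cases hiv : i = v
    · simp [hiv]
    · simp [hiv, Ne.symm hiv]
  calc ∑ v ∈ S, p v * ∑ i ∈ S.filter (fun i => i = v ∨ E v i), inRatio E p S i
      = ∑ i ∈ S, inRatio E p S i * ∑ v ∈ S.filter (fun v => i = v ∨ E v i), p v := by
        simp only [Finset.mul_sum, Finset.sum_filter, mul_ite, mul_zero]
        rw [Finset.sum_comm]
        exact Finset.sum_congr rfl fun i _ => Finset.sum_congr rfl fun v _ => by
          split_ifs <;> ring
    _ = ∑ i ∈ S, p i := Finset.sum_congr rfl fun i hi => by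
        rw [closedIn_sum i hi, inRatio]
        exact div_mul_cancel₀ _ (add_pos_of_pos_of_nonneg (hp i)
          (Finset.sum_nonneg fun j _ => (hp j).le)).ne'

theorem exists_sum_inRatio_closedOut_le_one {S : Finset V} (hS : S.Nonempty)
    (hp : ∀ j, 0 < p j) :
    ∃ v ∈ S, ∑ i ∈ S.filter (fun i => i = v ∨ E v i), inRatio E p S i ≤ 1 := by
  obtain ⟨v, hv, hle⟩ := Finset.exists_le_of_sum_le hS
    (sum_mul_sum_inRatio_closedOut (E := E) S hp).le
  exact ⟨v, hv, (mul_le_iff_le_one_right (hp v)).mp hle⟩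

theorem exists_inducesAcyclic_sum_inRatio_le (hp : ∀ j, 0 < p j) (S : Finset V) :
    ∃ A ⊆ S, InducesAcyclic E A ∧ ∑ i ∈ S, inRatio E p S i ≤ A.card := by
  induction S using Finset.strongInduction with
  | H S ih =>
  rcases S.eq_empty_or_nonempty with rfl | hS
  · exact ⟨∅, subset_rfl, .empty, by simp⟩
  obtain ⟨v, hvS, hv⟩ := exists_sum_inRatio_closedOut_le_one (E := E) hS hp
  set T := S.filter (fun i => ¬(i = v ∨ E v i))
  have hvT : v ∉ T := by simp [T]
  obtain ⟨A, hAT, hA, hsum⟩ :=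
    ih T (Finset.ssubset_iff_subset_ne.mpr ⟨Finset.filter_subset _ _, fun h => hvT (h ▸ hvS)⟩)
  have hvA : v ∉ A := fun h => hvT (hAT h)
  refine ⟨insert v A, Finset.insert_subset hvS (hAT.trans (Finset.filter_subset _ _)),
    hA.insert_of_forall_not_adj fun x hx hE => (Finset.mem_filter.mp (hAT hx)).2 (.inr hE), ?_⟩
  calc ∑ i ∈ S, inRatio E p S i
      = ∑ i ∈ S.filter (fun i => i = v ∨ E v i), inRatio E p S i + ∑ i ∈ T, inRatio E p S i :=
        (Finset.sum_filter_add_sum_filter_not _ _ _).symm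
    _ ≤ 1 + ∑ i ∈ T, inRatio E p T i :=
        add_le_add hv (Finset.sum_le_sum fun i _ => inRatio_anti (Finset.filter_subset _ _) hp)
    _ ≤ (insert v A).card := by
        rw [Finset.card_insert_of_notMem hvA]
        push_cast
        linarith

end InRatio

theorem sum_ratio_le_mas_general (K : ℕ) (E : Fin K → Fin K → Prop) [DecidableRel E]
    (p : Fin K → ℝ) (hp : ∀ i, 0 < p i) :
    ∑ i, p i / (p i + ∑ j ∈ Finset.univ.filter (fun j => E j i ∧ j ≠ i), p j) ≤
      (mas (Fin K) E : ℝ) := by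
  obtain ⟨A, -, hA, hsum⟩ := exists_inducesAcyclic_sum_inRatio_le hp (E := E) Finset.univ
  exact hsum.trans (by exact_mod_cast card_le_mas hA)

/-- For any directed graph on `{1, …, K}` and any probability distribution `p` with
`p i > 0`, `∑_i p_i / (p_i + ∑_{j ∈ N_in(i)} p_j) ≤ mas(G)`. -/
theorem sum_ratio_le_mas (K : ℕ) (E : Fin K → Fin K → Prop) [DecidableRel E]
    (p : Fin K → ℝ) (hp : ∀ i, 0 < p i) (hsum : ∑ i, p i = 1) :
    ∑ i, p i / (p i + ∑ j ∈ Finset.univ.filter (fun j => E j i ∧ j ≠ i), p j) ≤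
      (mas (Fin K) E : ℝ) :=
  sum_ratio_le_mas_general K E p hp
end

section
/- Let G = (V, E) be a directed graph with V = {1, ..., K} and let p be a probability distribution over V with p_i > 0 for all i. Then ∑_{i=1}^{K} p_i / (p_i + ∑_{j ∈ N_in(i)} p_j) ≤ α̃(G), where α̃(G) is the strong independence number of G. -/
/-- A set `S` is strongly independent in the directed graph `E` if no two distinct
vertices of `S` are joined by edges in both directions. -/
def StronglyIndep {V : Type*} (E : V → V → Prop) (S : Finset V) : Prop :=
  ∀ i ∈ S, ∀ j ∈ S, i ≠ j → ¬(E i j ∧ E j i)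

/-- The strong independence number of a directed graph. -/
noncomputable def strongIndepNum (V : Type*) [Fintype V] (E : V → V → Prop) : ℕ :=
  sSup {n | ∃ S : Finset V, StronglyIndep E S ∧ S.card = n}

/-- For any directed graph on `{1, …, K}` and any probability distribution `p` with
`p i > 0`, `∑_i p_i / (p_i + ∑_{j ∈ N_in(i)} p_j) ≤ α̃(G)`, the strong independence
number of `G`. -/
theorem sum_ratio_le_strongIndepNum (K : ℕ) (E : Fin K → Fin K → Prop) [DecidableRel E]
    (p : Fin K → ℝ) (hp : ∀ i, 0 < p i) (hsum : ∑ i, p i = 1) :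
    ∑ i, p i / (p i + ∑ j ∈ Finset.univ.filter (fun j => E j i ∧ j ≠ i), p j) ≤
      (strongIndepNum (Fin K) E : ℝ) := by
  classical
  -- the denominator function relative to a vertex set A
  set d : Finset (Fin K) → Fin K → ℝ :=
    fun A i => p i + ∑ j ∈ A.filter (fun j => E j i ∧ j ≠ i), p j with hd
  have hdpos : ∀ A i, 0 < d A i := by
    intro A i
    have : (0:ℝ) ≤ ∑ j ∈ A.filter (fun j => E j i ∧ j ≠ i), p j :=
      Finset.sum_nonneg fun j _ => (hp j).le
    have := hp i
    simp only [hd]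
    linarith
  have key : ∀ n (A : Finset (Fin K)), A.card ≤ n →
      ∃ S : Finset (Fin K), S ⊆ A ∧ StronglyIndep E S ∧
        ∑ i ∈ A, p i / d A i ≤ (S.card : ℝ) := by
    intro n
    induction n with
    | zero =>
      intro A hA
      have : A = ∅ := Finset.card_eq_zero.1 (Nat.le_zero.1 hA)
      subst this
      exact ⟨∅, Finset.Subset.refl _, fun i hi => by simp at hi, by simp⟩
    | succ n ih =>
      intro A hA
      rcases Finset.eq_empty_or_nonempty A with rfl | hAne
      · exact ⟨∅, Finset.Subset.refl _, fun i hi => by simp at hi, by simp⟩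
      obtain ⟨v, hvA, hvmin⟩ := A.exists_min_image (d A) hAne
      set Nv : Finset (Fin K) := insert v (A.filter (fun j => E j v ∧ j ≠ v)) with hNvdef
      have hNvA : Nv ⊆ A := by
        intro x hx
        rcases Finset.mem_insert.1 hx with rfl | hx
        · exact hvA
        · exact (Finset.mem_filter.1 hx).1
      set B : Finset (Fin K) := A \ Nv with hBdef
      have hBA : B ⊆ A := Finset.sdiff_subset
      have hvNv : v ∈ Nv := Finset.mem_insert_self _ _
      have hvB : v ∉ B := fun h => (Finset.mem_sdiff.1 h).2 hvNv
      have hBcard : B.card ≤ n := by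
        have hBlt : B.card < A.card := Finset.card_lt_card ⟨hBA, fun h => hvB (h hvA)⟩
        omega
      obtain ⟨S', hS'B, hS'indep, hS'le⟩ := ih B hBcard
      -- split the sum
      have hsplit : ∑ i ∈ A, p i / d A i
          = ∑ i ∈ Nv, p i / d A i + ∑ i ∈ B, p i / d A i := by
        rw [hBdef, add_comm, Finset.sum_sdiff_eq_sub hNvA]
        ring
      -- part 1: sum over Nv is at most 1
      have hsumNv : ∑ i ∈ Nv, p i = d A v := by
        have hvnot : v ∉ A.filter (fun j => E j v ∧ j ≠ v) := by
          simp [Finset.mem_filter]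
        rw [hNvdef, Finset.sum_insert hvnot, hd]
      have hpart1 : ∑ i ∈ Nv, p i / d A i ≤ 1 := by
        have h1 : ∑ i ∈ Nv, p i / d A i ≤ ∑ i ∈ Nv, p i / d A v := by
          apply Finset.sum_le_sum
          intro i hi
          exact div_le_div_of_nonneg_left (hp i).le (hdpos A v) (hvmin i (hNvA hi))
        have h2 : ∑ i ∈ Nv, p i / d A v = 1 := by
          rw [← Finset.sum_div, hsumNv, div_self (hdpos A v).ne']
        linarith
      -- part 2: sum over B
      have hpart2 : ∑ i ∈ B, p i / d A i ≤ (S'.card : ℝ) := by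
        refine le_trans ?_ hS'le
        apply Finset.sum_le_sum
        intro i hi
        apply div_le_div_of_nonneg_left (hp i).le (hdpos B i)
        simp only [hd]
        have : ∑ j ∈ B.filter (fun j => E j i ∧ j ≠ i), p j
            ≤ ∑ j ∈ A.filter (fun j => E j i ∧ j ≠ i), p j := by
          apply Finset.sum_le_sum_of_subset_of_nonneg
          · exact Finset.filter_subset_filter _ hBA
          · intro j _ _; exact (hp j).le
        linarith
      -- build the independent set
      have hvS' : v ∉ S' := fun h => hvB (hS'B h)
      refine ⟨insert v S', ?_, ?_, ?_⟩
      · intro x hx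
        rcases Finset.mem_insert.1 hx with rfl | hx
        · exact hvA
        · exact hBA (hS'B hx)
      · have hnot : ∀ x ∈ S', ¬(E x v ∧ E v x) := by
          rintro x hx ⟨h1, _⟩
          have hxB := hS'B hx
          have hxv : x ≠ v := fun h => hvB (h ▸ hxB)
          exact (Finset.mem_sdiff.1 hxB).2 (Finset.mem_insert_of_mem
            (Finset.mem_filter.2 ⟨hBA hxB, h1, hxv⟩))
        intro i hi j hj hij hEij
        rcases Finset.mem_insert.1 hi with hiv | hi
        · rcases Finset.mem_insert.1 hj with hjv | hj
          · exact hij (hiv.trans hjv.symm)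
          · exact hnot j hj ⟨hiv ▸ hEij.2, hiv ▸ hEij.1⟩
        · rcases Finset.mem_insert.1 hj with hjv | hj
          · exact hnot i hi ⟨hjv ▸ hEij.1, hjv ▸ hEij.2⟩
          · exact hS'indep i hi j hj hij hEij
      · rw [Finset.card_insert_of_notMem hvS', hsplit]
        push_cast
        linarith
  obtain ⟨S, _, hSindep, hSle⟩ := key (Finset.univ : Finset (Fin K)).card Finset.univ le_rfl
  have hmem : S.card ∈ {n | ∃ S : Finset (Fin K), StronglyIndep E S ∧ S.card = n} :=
    ⟨S, hSindep, rfl⟩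
  have hbdd : BddAbove {n | ∃ S : Finset (Fin K), StronglyIndep E S ∧ S.card = n} := by
    refine ⟨K, ?_⟩
    rintro n ⟨T, _, rfl⟩
    simpa using (Finset.card_le_univ T)
  have hle : S.card ≤ strongIndepNum (Fin K) E := le_csSup hbdd hmem
  calc ∑ i, p i / (p i + ∑ j ∈ Finset.univ.filter (fun j => E j i ∧ j ≠ i), p j)
      = ∑ i ∈ Finset.univ, p i / d Finset.univ i := rfl
    _ ≤ (S.card : ℝ) := hSle
    _ ≤ (strongIndepNum (Fin K) E : ℝ) := by exact_mod_cast hle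
end

section
/- Let X_1, ..., X_n be Bernoulli random variables adapted to a filtration F_1, ..., F_n, and let λ ∈ (0, 1]. Let E_λ be the event that E[X_s | F_{s-1}] ≥ λ for all s ∈ {1, ..., n}. Then P((∑_{s=1}^{n} X_s ≤ n λ / 2) ∧ E_λ) ≤ e^{-n λ / 8}. -/
/-!
Let `W_t = ∏_{s ≤ t} 1{E[X_s | ℱ_{s-1}] ≥ λ} (1 - X_s/2) / (1 - λ/2)`. The indicator is
`ℱ_{s-1}`-measurable, so conditioning the `s`-th factor on `ℱ_{s-1}` gives at most
`(1 - λ/2) / (1 - λ/2) = 1`: `W` is a nonnegative supermartingale with `W_0 = 1`, whatever the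
event `E_λ`. On `E_λ ∩ {∑ X_s ≤ nλ/2}` the indicators are all `1` and `1 - X_s/2 = 2^{-X_s}`, so
`W_n ≥ q^{-n}` with `q = (1 - λ/2) 2^{λ/2}`. Markov's inequality bounds the probability by
`q^n ≤ e^{-nλ/8}`, using `1 - x ≤ e^{-x}` and `log 2 ≤ 3/4`.
-/

open MeasureTheory

theorem one_sub_mul_two_rpow_le_exp {x : ℝ} (hx : 0 ≤ x) :
    (1 - x) * (2 : ℝ) ^ x ≤ Real.exp (-x / 4) := by
  have hlog2 : Real.log 2 ≤ 3 / 4 := Real.log_two_lt_d9.le.trans (by norm_num)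
  calc (1 - x) * (2 : ℝ) ^ x
      ≤ Real.exp (-x) * Real.exp (Real.log 2 * x) := by
        rw [Real.rpow_def_of_pos two_pos]
        gcongr
        linarith [Real.add_one_le_exp (-x)]
    _ ≤ Real.exp (-x / 4) := by
        rw [← Real.exp_add, Real.exp_le_exp]
        nlinarith

theorem condExp_const_sub_div {Ω : Type*} {m m0 : MeasurableSpace Ω} {μ : Measure Ω}
    [IsFiniteMeasure μ] (hm : m ≤ m0) {f : Ω → ℝ} (hf : Integrable f μ) (a b : ℝ) :
    μ[fun ω => a - f ω / b | m] =ᵐ[μ] fun ω => a - μ[f | m] ω / b := by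
  have hdiv : (fun ω => f ω / b) = b⁻¹ • f := by ext ω; simp [div_eq_inv_mul]
  filter_upwards [condExp_sub (integrable_const a) (hf.div_const b) m,
    condExp_smul (μ := μ) b⁻¹ f m] with ω hsub hsmul
  rw [show (fun ω => a - f ω / b) = (fun _ => a) - fun ω => f ω / b from rfl, hsub,
    Pi.sub_apply, condExp_const hm, hdiv, hsmul]
  simp [div_eq_inv_mul]

namespace AdaptedBernoulli

variable {Ω : Type*} {m0 : MeasurableSpace Ω}

noncomputable def gate (μ : Measure Ω) (ℱ : Filtration ℕ m0) (X : ℕ → Ω → ℝ) (lam : ℝ)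
    (s : ℕ) (ω : Ω) : ℝ :=
  if lam ≤ μ[X s | ℱ (s - 1)] ω then (1 - lam / 2)⁻¹ else 0

noncomputable def weight (μ : Measure Ω) (ℱ : Filtration ℕ m0) (X : ℕ → Ω → ℝ) (lam : ℝ)
    (t : ℕ) (ω : Ω) : ℝ :=
  ∏ s ∈ Finset.Icc 1 t, gate μ ℱ X lam s ω * (1 - X s ω / 2)

variable {μ : Measure Ω} {ℱ : Filtration ℕ m0} {X : ℕ → Ω → ℝ} {lam : ℝ}

theorem measurable_gate (s : ℕ) : Measurable[ℱ (s - 1)] (gate μ ℱ X lam s) :=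
  Measurable.ite (measurableSet_le measurable_const stronglyMeasurable_condExp.measurable)
    measurable_const measurable_const

theorem gate_mul_mem_Icc (hX : ∀ s ω, X s ω ∈ Set.Icc (0 : ℝ) 1) (hlam : lam < 2)
    (s : ℕ) (ω : Ω) :
    gate μ ℱ X lam s ω * (1 - X s ω / 2) ∈ Set.Icc 0 (1 - lam / 2)⁻¹ := by
  have hq : 0 < 1 - lam / 2 := by linarith
  obtain ⟨hX0, hX1⟩ := hX s ω
  unfold gate
  split_ifs
  · exact ⟨by nlinarith [inv_pos.2 hq], by nlinarith [inv_pos.2 hq]⟩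
  · simp [hq.le]

theorem weight_nonneg (hX : ∀ s ω, X s ω ∈ Set.Icc (0 : ℝ) 1) (hlam : lam < 2)
    (t : ℕ) (ω : Ω) : 0 ≤ weight μ ℱ X lam t ω :=
  Finset.prod_nonneg fun s _ => (gate_mul_mem_Icc hX hlam s ω).1

theorem weight_le (hX : ∀ s ω, X s ω ∈ Set.Icc (0 : ℝ) 1) (hlam : lam < 2)
    (t : ℕ) (ω : Ω) : weight μ ℱ X lam t ω ≤ (1 - lam / 2)⁻¹ ^ t := by
  calc weight μ ℱ X lam t ω ≤ ∏ _s ∈ Finset.Icc 1 t, (1 - lam / 2)⁻¹ :=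
        Finset.prod_le_prod (fun s _ => (gate_mul_mem_Icc hX hlam s ω).1)
          (fun s _ => (gate_mul_mem_Icc hX hlam s ω).2)
    _ = (1 - lam / 2)⁻¹ ^ t := by simp

theorem weight_succ (t : ℕ) :
    weight μ ℱ X lam (t + 1) =
      (weight μ ℱ X lam t * gate μ ℱ X lam (t + 1)) * fun ω => 1 - X (t + 1) ω / 2 := by
  ext ω
  simp only [weight, Pi.mul_apply, Finset.prod_Icc_succ_top (Nat.le_add_left 1 t), mul_assoc]

theorem stronglyAdapted_weight (hadapt : ∀ s, Measurable[ℱ s] (X s)) :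
    StronglyAdapted ℱ (weight μ ℱ X lam) := fun t =>
  (Finset.measurable_prod _ fun s hs =>
    (((measurable_gate s).mono (ℱ.mono (by omega)) le_rfl).mul
      (measurable_const.sub ((hadapt s).div_const 2))).mono
      (ℱ.mono (Finset.mem_Icc.1 hs).2) le_rfl).stronglyMeasurable

section Finite

variable [IsFiniteMeasure μ]

theorem integrable_weight (hadapt : ∀ s, Measurable[ℱ s] (X s))
    (hX : ∀ s ω, X s ω ∈ Set.Icc (0 : ℝ) 1) (hlam : lam < 2) (t : ℕ) :
    Integrable (weight μ ℱ X lam t) μ :=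
  .of_bound (((stronglyAdapted_weight hadapt t).mono (ℱ.le t)).aestronglyMeasurable) _
    (ae_of_all _ fun ω => by
      rw [Real.norm_of_nonneg (weight_nonneg hX hlam t ω)]
      exact weight_le hX hlam t ω)

theorem condExp_weight_succ_le (hadapt : ∀ s, Measurable[ℱ s] (X s))
    (hX : ∀ s ω, X s ω ∈ Set.Icc (0 : ℝ) 1) (hlam : lam < 2) (t : ℕ) :
    μ[weight μ ℱ X lam (t + 1) | ℱ t] ≤ᵐ[μ] weight μ ℱ X lam t := by
  have hXint : Integrable (X (t + 1)) μ :=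
    .of_bound (((hadapt _).mono (ℱ.le _) le_rfl).aestronglyMeasurable) 1
      (ae_of_all _ fun ω => by
        rw [Real.norm_of_nonneg (hX _ ω).1]; exact (hX _ ω).2)
  have hpred : StronglyMeasurable[ℱ t] (weight μ ℱ X lam t * gate μ ℱ X lam (t + 1)) :=
    ((stronglyAdapted_weight hadapt t).measurable.mul (measurable_gate (t + 1))).stronglyMeasurable
  have hYint : Integrable (fun ω => 1 - X (t + 1) ω / 2) μ :=
    (integrable_const 1).sub (hXint.div_const 2)
  have hq : 0 < 1 - lam / 2 := by linarith
  rw [weight_succ]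
  filter_upwards [condExp_mul_of_stronglyMeasurable_left hpred
      (weight_succ (μ := μ) t ▸ integrable_weight hadapt hX hlam (t + 1))
      hYint,
    condExp_const_sub_div (ℱ.le t) hXint 1 2] with ω hmul hsub
  rw [hmul, Pi.mul_apply, hsub, Pi.mul_apply]
  have hW := weight_nonneg (μ := μ) (ℱ := ℱ) hX hlam t ω
  simp only [gate, Nat.add_sub_cancel]
  split_ifs with h
  · calc weight μ ℱ X lam t ω * (1 - lam / 2)⁻¹ * (1 - μ[X (t + 1) | ℱ t] ω / 2)
        = weight μ ℱ X lam t ω * ((1 - μ[X (t + 1) | ℱ t] ω / 2) / (1 - lam / 2)) := by ring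
      _ ≤ weight μ ℱ X lam t ω * 1 := by
        gcongr
        rw [div_le_one hq]; linarith
      _ = weight μ ℱ X lam t ω := mul_one _
  · simpa using hW

theorem supermartingale_weight (hadapt : ∀ s, Measurable[ℱ s] (X s))
    (hX : ∀ s ω, X s ω ∈ Set.Icc (0 : ℝ) 1) (hlam : lam < 2) :
    Supermartingale (weight μ ℱ X lam) ℱ μ :=
  supermartingale_nat (stronglyAdapted_weight hadapt) (integrable_weight hadapt hX hlam)
    (condExp_weight_succ_le hadapt hX hlam)

end Finite

theorem integral_weight_le_one [IsProbabilityMeasure μ] (hadapt : ∀ s, Measurable[ℱ s] (X s))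
    (hX : ∀ s ω, X s ω ∈ Set.Icc (0 : ℝ) 1) (hlam : lam < 2) (t : ℕ) :
    ∫ ω, weight μ ℱ X lam t ω ∂μ ≤ 1 := by
  simpa [weight] using
    (supermartingale_weight (μ := μ) hadapt hX hlam).setIntegral_le (Nat.zero_le t)
      MeasurableSet.univ

theorem inv_pow_le_weight (hBern : ∀ s ω, X s ω = 0 ∨ X s ω = 1) (hlam : lam < 2)
    {n : ℕ} {ω : Ω} (hsum : ∑ s ∈ Finset.Icc 1 n, X s ω ≤ (n : ℝ) * lam / 2)
    (hE : ∀ s ∈ Finset.Icc 1 n, lam ≤ μ[X s | ℱ (s - 1)] ω) :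
    (((1 - lam / 2) * (2 : ℝ) ^ (lam / 2)) ^ n)⁻¹ ≤ weight μ ℱ X lam n ω := by
  have hq : 0 < 1 - lam / 2 := by linarith
  have hfactor : ∀ s ∈ Finset.Icc 1 n,
      gate μ ℱ X lam s ω * (1 - X s ω / 2) = (1 - lam / 2)⁻¹ * (2 : ℝ) ^ (-X s ω) := by
    intro s hs
    rw [gate, if_pos (hE s hs)]
    rcases hBern s ω with h | h <;> norm_num [h]
  have hweight : weight μ ℱ X lam n ω =
      (1 - lam / 2)⁻¹ ^ n * (2 : ℝ) ^ (-∑ s ∈ Finset.Icc 1 n, X s ω) := by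
    rw [weight, Finset.prod_congr rfl hfactor, Finset.prod_mul_distrib, Finset.prod_const,
      Nat.card_Icc, Nat.add_sub_cancel, ← Finset.sum_neg_distrib,
      Real.rpow_sum_of_pos two_pos]
  rw [hweight, mul_pow, mul_inv, inv_pow, ← Real.rpow_mul_natCast zero_le_two,
    ← Real.rpow_neg zero_le_two]
  gcongr
  · norm_num
  · linarith

end AdaptedBernoulli

open AdaptedBernoulli in
/-- Concentration bound for adapted Bernoulli variables: if on the event `E_λ` each
conditional expectation `E[X_s | F_{s-1}]` is at least `λ`, then the probability that
`∑_{s=1}^n X_s ≤ nλ/2` and `E_λ` holds is at most `e^{-nλ/8}`. -/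
theorem bernoulli_adapted_concentration {Ω : Type*} {m0 : MeasurableSpace Ω}
    (μ : Measure Ω) [IsProbabilityMeasure μ] (ℱ : Filtration ℕ m0)
    (n : ℕ) (X : ℕ → Ω → ℝ)
    (hadapt : ∀ s, Measurable[ℱ s] (X s))
    (hBern : ∀ s ω, X s ω = 0 ∨ X s ω = 1)
    (lam : ℝ) (hlam0 : 0 < lam) (hlam1 : lam ≤ 1) :
    μ {ω | (∑ s ∈ Finset.Icc 1 n, X s ω ≤ (n : ℝ) * lam / 2) ∧
        ∀ s ∈ Finset.Icc 1 n, lam ≤ (μ[X s | ℱ (s - 1)]) ω} ≤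
      ENNReal.ofReal (Real.exp (-((n : ℝ) * lam) / 8)) := by
  have hlam : lam < 2 := by linarith
  have hX : ∀ s ω, X s ω ∈ Set.Icc (0 : ℝ) 1 := fun s ω => by
    rcases hBern s ω with h | h <;> simp [h]
  set q := (1 - lam / 2) * (2 : ℝ) ^ (lam / 2)
  have hq0 : 0 < q := mul_pos (by linarith) (by positivity)
  have hqn : 0 < q ^ n := pow_pos hq0 n
  have hmarkov : (q ^ n)⁻¹ * μ.real {ω | (q ^ n)⁻¹ ≤ weight μ ℱ X lam n ω} ≤ 1 :=
    (mul_meas_ge_le_integral_of_nonneg (ae_of_all _ (weight_nonneg hX hlam n))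
      (integrable_weight hadapt hX hlam n) _).trans (integral_weight_le_one hadapt hX hlam n)
  have hq : q ≤ Real.exp (-lam / 8) := by
    convert one_sub_mul_two_rpow_le_exp (x := lam / 2) (by positivity) using 2
    ring
  calc _ ≤ μ {ω | (q ^ n)⁻¹ ≤ weight μ ℱ X lam n ω} :=
        measure_mono fun ω hω => inv_pow_le_weight hBern hlam hω.1 hω.2
    _ = ENNReal.ofReal (μ.real {ω | (q ^ n)⁻¹ ≤ weight μ ℱ X lam n ω}) :=
        (ofReal_measureReal (measure_ne_top μ _)).symm
    _ ≤ ENNReal.ofReal (q ^ n) := by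
        gcongr
        rwa [inv_mul_le_iff₀ hqn, mul_one] at hmarkov
    _ ≤ ENNReal.ofReal (Real.exp (-((n : ℝ) * lam) / 8)) := by
        gcongr
        calc q ^ n ≤ Real.exp (-lam / 8) ^ n := by gcongr
          _ = Real.exp (-((n : ℝ) * lam) / 8) := by rw [← Real.exp_nat_mul]; ring_nf
end

section
/- For any sequences of non-negative reals X_{t,i} (t = 1, ..., T; i = 1, ..., K) and any non-increasing positive sequence η_1 ≥ η_2 ≥ ... ≥ η_T > 0, defining q_{t,i} = exp(-η_t ∑_{s<t} X_{s,i}) / ∑_{j=1}^{K} exp(-η_t ∑_{s<t} X_{s,j}), we have ∑_{t=1}^{T} ∑_{i=1}^{K} q_{t,i} X_{t,i} - min_{k} ∑_{t=1}^{T} X_{t,k} ≤ (ln K)/η_T + ∑_{t=1}^{T} (η_t/2) ∑_{i=1}^{K} q_{t,i} X_{t,i}². -/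
/-!
The regret is controlled by the potential `Φ_η(L) = -(1/η) log ((1/K) ∑ᵢ exp(-η Lᵢ))` of the
cumulative losses `L`. In round `t` the potential grows by at least the expected loss minus
`(η_t/2) ∑ᵢ q_{t,i} X_{t,i}²` (from `exp(-x) ≤ 1 - x + x²/2` and `log y ≤ y - 1`), and lowering the
learning rate from `η_{t-1}` to `η_t` can only increase it (power-mean inequality). Telescoping,
the total is at most `Φ_{η_T}(L_{T+1}) ≤ min_k L_{T+1,k} + (ln K)/η_T`.
-/

open Finset Real

theorem Real.exp_neg_le_one_sub_add_sq_div_two {x : ℝ} (hx : 0 ≤ x) :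
    exp (-x) ≤ 1 - x + x ^ 2 / 2 := by
  have hq : 0 < 1 + x + x ^ 2 / 2 := by positivity
  calc exp (-x) = (exp x)⁻¹ := exp_neg x
    _ ≤ (1 + x + x ^ 2 / 2)⁻¹ := inv_anti₀ hq (quadratic_le_exp_of_nonneg hx)
    _ ≤ 1 - x + x ^ 2 / 2 := by
      -- `(1 - x + x²/2)(1 + x + x²/2) = 1 + x⁴/4`
      rw [inv_le_iff_one_le_mul₀ hq]
      nlinarith [pow_nonneg hx 4]

namespace ExpWeights

variable {ι : Type*} [Fintype ι]

noncomputable def expWeights (η : ℝ) (L : ι → ℝ) (i : ι) : ℝ :=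
  exp (-η * L i) / ∑ j, exp (-η * L j)

noncomputable def expPotential (η : ℝ) (L : ι → ℝ) : ℝ :=
  -log ((∑ i, exp (-η * L i)) / Fintype.card ι) / η

lemma sum_exp_pos [Nonempty ι] (η : ℝ) (L : ι → ℝ) : 0 < ∑ i, exp (-η * L i) :=
  sum_pos (fun _ _ => exp_pos _) univ_nonempty

lemma expWeights_nonneg (η : ℝ) (L : ι → ℝ) (i : ι) : 0 ≤ expWeights η L i := by
  unfold expWeights
  positivity

lemma sum_expWeights [Nonempty ι] (η : ℝ) (L : ι → ℝ) : ∑ i, expWeights η L i = 1 := by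
  simp only [expWeights, ← sum_div]
  exact div_self (sum_exp_pos η L).ne'

lemma sum_mul_exp_neg_le {q y : ι → ℝ} (hq : ∀ i, 0 ≤ q i) (hq1 : ∑ i, q i = 1)
    (hy : ∀ i, 0 ≤ y i) :
    ∑ i, q i * exp (-y i) ≤ 1 - ∑ i, q i * y i + (∑ i, q i * y i ^ 2) / 2 := by
  calc ∑ i, q i * exp (-y i) ≤ ∑ i, q i * (1 - y i + y i ^ 2 / 2) :=
        sum_le_sum fun i _ =>
          mul_le_mul_of_nonneg_left (exp_neg_le_one_sub_add_sq_div_two (hy i)) (hq i)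
    _ = ∑ i, q i - ∑ i, q i * y i + (∑ i, q i * y i ^ 2) / 2 := by
        rw [sum_div, ← sum_sub_distrib, ← sum_add_distrib]
        exact sum_congr rfl fun i _ => by ring
    _ = 1 - ∑ i, q i * y i + (∑ i, q i * y i ^ 2) / 2 := by rw [hq1]

lemma sum_expWeights_mul_exp (η : ℝ) (L x : ι → ℝ) :
    ∑ i, expWeights η L i * exp (-η * x i) =
      (∑ i, exp (-η * (L + x) i)) / ∑ i, exp (-η * L i) := by
  rw [sum_div]
  refine sum_congr rfl fun i _ => ?_
  rw [expWeights, div_mul_eq_mul_div, ← exp_add, Pi.add_apply, mul_add]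

lemma expPotential_add_sub [Nonempty ι] (η : ℝ) (L x : ι → ℝ) :
    expPotential η (L + x) - expPotential η L =
      -log (∑ i, expWeights η L i * exp (-η * x i)) / η := by
  have hK : (Fintype.card ι : ℝ) ≠ 0 := by positivity
  have hS' := (sum_exp_pos η (L + x)).ne'
  have hS := (sum_exp_pos η L).ne'
  rw [sum_expWeights_mul_exp, expPotential, expPotential, log_div hS' hK, log_div hS hK,
    log_div hS' hS]
  ring

theorem sum_expWeights_mul_sub_le_expPotential_add_sub [Nonempty ι] {η : ℝ} (hη : 0 < η)
    (L x : ι → ℝ) (hx : ∀ i, 0 ≤ x i) :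
    ∑ i, expWeights η L i * x i - η / 2 * ∑ i, expWeights η L i * x i ^ 2 ≤
      expPotential η (L + x) - expPotential η L := by
  set R := ∑ i, expWeights η L i * exp (-η * x i)
  have hR : R ≤ 1 - η * ∑ i, expWeights η L i * x i +
      η ^ 2 / 2 * ∑ i, expWeights η L i * x i ^ 2 := by
    have := sum_mul_exp_neg_le (expWeights_nonneg η L) (sum_expWeights η L)
      (fun i => mul_nonneg hη.le (hx i))
    simp only [mul_pow, ← neg_mul, mul_left_comm _ η, mul_left_comm _ (η ^ 2), ← mul_sum] at this
    linarith
  have hlog : log R ≤ R - 1 := log_le_sub_one_of_pos <| by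
    rw [show R = _ from sum_expWeights_mul_exp η L x]
    exact div_pos (sum_exp_pos η _) (sum_exp_pos η L)
  rw [expPotential_add_sub, le_div_iff₀ hη]
  linarith

theorem expPotential_le_expPotential_of_le [Nonempty ι] (L : ι → ℝ) {a b : ℝ} (ha : 0 < a)
    (hab : a ≤ b) :
    expPotential b L ≤ expPotential a L := by
  have hb : 0 < b := ha.trans_le hab
  have hK : (0 : ℝ) < Fintype.card ι := by positivity
  set A := (∑ i, exp (-a * L i)) / Fintype.card ι
  set B := (∑ i, exp (-b * L i)) / Fintype.card ι
  have hA : 0 < A := div_pos (sum_exp_pos a L) hK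
  -- power-mean inequality with exponent `b / a ≥ 1` for the uniform weights
  have hpow : A ^ (b / a) ≤ B := by
    have hw : ∑ _i : ι, (Fintype.card ι : ℝ)⁻¹ = 1 := by
      rw [sum_const, card_univ, nsmul_eq_mul, mul_inv_cancel₀ hK.ne']
    have hA' : ∑ i, (Fintype.card ι : ℝ)⁻¹ * exp (-a * L i) = A := by
      rw [← mul_sum, inv_mul_eq_div]
    have hB' : ∑ i, (Fintype.card ι : ℝ)⁻¹ * exp (-a * L i) ^ (b / a) = B := by
      rw [← mul_sum, inv_mul_eq_div]
      congr 2 with i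
      rw [← exp_mul]
      field_simp
    have := rpow_arith_mean_le_arith_mean_rpow univ (fun _ => (Fintype.card ι : ℝ)⁻¹)
      (fun i => exp (-a * L i)) (fun _ _ => by positivity) hw (fun _ _ => (exp_pos _).le)
      ((one_le_div ha).2 hab)
    rwa [hA', hB'] at this
  have hlog : b / a * log A ≤ log B := by
    rw [← log_rpow hA]
    exact log_le_log (rpow_pos_of_pos hA _) hpow
  rw [expPotential, expPotential, div_le_div_iff₀ hb ha]
  rw [div_mul_eq_mul_div, div_le_iff₀ ha] at hlog
  linarith

lemma expPotential_zero [Nonempty ι] (η : ℝ) : expPotential η (0 : ι → ℝ) = 0 := by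
  simp [expPotential]

theorem expPotential_le [Nonempty ι] {η : ℝ} (hη : 0 < η) (L : ι → ℝ) (k : ι) :
    expPotential η L ≤ L k + log (Fintype.card ι) / η := by
  have hK : (0 : ℝ) < Fintype.card ι := by positivity
  have hS := sum_exp_pos η L
  have hk : -η * L k ≤ log (∑ i, exp (-η * L i)) := by
    rw [← log_exp (-η * L k)]
    exact log_le_log (exp_pos _) (single_le_sum (fun i _ => (exp_pos (-η * L i)).le) (mem_univ k))
  rw [expPotential, log_div hS.ne' hK.ne', div_le_iff₀ hη, add_mul, div_mul_cancel₀ _ hη.ne']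
  linarith

end ExpWeights

open ExpWeights in
/-- Regret bound for exponential weights with a time-varying non-increasing learning
rate (Lemma 7 of Seldin–Slivkins): for non-negative `X_{t,i}` and
`q_{t,i} = exp(-η_t ∑_{s<t} X_{s,i}) / ∑_j exp(-η_t ∑_{s<t} X_{s,j})`,
`∑_t ∑_i q_{t,i} X_{t,i} - min_k ∑_t X_{t,k}
  ≤ (ln K)/η_T + ∑_t (η_t/2) ∑_i q_{t,i} X_{t,i}²`. -/
theorem exp_weights_regret (K T : ℕ) (hK : 1 ≤ K) (hT : 1 ≤ T)
    (X : ℕ → Fin K → ℝ) (hX : ∀ t i, 0 ≤ X t i)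
    (η : ℕ → ℝ) (hpos : ∀ t ∈ Finset.Icc 1 T, 0 < η t)
    (hmono : ∀ s t, 1 ≤ s → s ≤ t → t ≤ T → η t ≤ η s) :
    (∑ t ∈ Finset.Icc 1 T, ∑ i : Fin K,
        (Real.exp (-η t * ∑ s ∈ Finset.Ico 1 t, X s i) /
          ∑ j : Fin K, Real.exp (-η t * ∑ s ∈ Finset.Ico 1 t, X s j)) * X t i)
      - Finset.inf' Finset.univ ⟨⟨0, hK⟩, Finset.mem_univ _⟩
          (fun k : Fin K => ∑ t ∈ Finset.Icc 1 T, X t k)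
    ≤ Real.log K / η T +
      ∑ t ∈ Finset.Icc 1 T, (η t / 2) * ∑ i : Fin K,
        (Real.exp (-η t * ∑ s ∈ Finset.Ico 1 t, X s i) /
          ∑ j : Fin K, Real.exp (-η t * ∑ s ∈ Finset.Ico 1 t, X s j)) * (X t i) ^ 2 := by
  have : Nonempty (Fin K) := ⟨⟨0, hK⟩⟩
  set L : ℕ → Fin K → ℝ := fun t i => ∑ s ∈ Ico 1 t, X s i with hL
  have hL1 : L 1 = 0 := by ext; simp [hL]
  have hLsucc : ∀ t, 1 ≤ t → L (t + 1) = L t + X t := fun t ht => by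
    ext i; exact sum_Ico_succ_top ht (fun s => X s i)
  -- the potential at the start of round `t`, still with the learning rate of round `t - 1`
  set P : ℕ → ℝ := fun t => expPotential (η (t - 1)) (L t)
  have hround : ∀ t ∈ Icc 1 T, ∑ i, expWeights (η t) (L t) i * X t i
      - η t / 2 * ∑ i, expWeights (η t) (L t) i * X t i ^ 2 ≤ P (t + 1) - P t := by
    intro t ht
    obtain ⟨ht1, htT⟩ := mem_Icc.1 ht
    have hdrift : P t ≤ expPotential (η t) (L t) := by
      obtain ⟨n, rfl⟩ := Nat.exists_eq_add_of_le' ht1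
      rcases Nat.eq_zero_or_pos n with rfl | hn
      · simp [P, hL1, expPotential_zero]
      · exact expPotential_le_expPotential_of_le _ (hpos _ ht) (hmono n (n + 1) hn (by omega) htT)
    have := sum_expWeights_mul_sub_le_expPotential_add_sub (hpos t ht) (L t) (X t) (hX t)
    simp only [P, Nat.add_sub_cancel, hLsucc t ht1] at this ⊢
    linarith
  obtain ⟨k, -, hk⟩ := exists_mem_eq_inf' (s := univ) ⟨⟨0, hK⟩, mem_univ _⟩
    (fun k : Fin K => ∑ t ∈ Icc 1 T, X t k)
  have hfinal : P (T + 1) ≤ ∑ t ∈ Icc 1 T, X t k + log K / η T := by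
    have := expPotential_le (hpos T (mem_Icc.2 ⟨hT, le_rfl⟩)) (L (T + 1)) k
    simpa [P, hL, Ico_add_one_right_eq_Icc] using this
  have hP1 : P 1 = 0 := by simp [P, hL1, expPotential_zero]
  have htotal := sum_le_sum hround
  rw [sum_sub_distrib, sum_Icc_sub hT, hP1, sub_zero] at htotal
  simp only [expWeights, hL] at htotal
  rw [hk]
  linarith
end

section
/- Let X_1, ..., X_n be a martingale difference sequence with respect to a filtration F_1, ..., F_n, with each X_j bounded above. Let S_n = ∑_{j=1}^{n} X_j, ν_n = ∑_{j=1}^{n} E[X_j² | F_{j-1}], and κ_n = max_{1 ≤ j ≤ n} X_j. Then for any δ > 0, ν > 0, κ > 0: P((S_n ≥ √(2 ν ln(1/δ)) + κ ln(1/δ)/3) ∧ (ν_n ≤ ν) ∧ (κ_n ≤ κ)) ≤ δ. -/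
/-!
Chernoff's method applied to an exponential supermartingale. Truncating the increments at `κ`,
`Y_j = min X_j κ` still satisfies `E[Y_j | F_{j-1}] ≤ 0`, and since `l Y_j ≤ l κ < 3` the elementary
bound `eˣ ≤ 1 + x + x² / (2 (1 - lκ/3))` for `x ≤ lκ` gives
`E[exp (l Y_j) | F_{j-1}] ≤ exp (c E[X_j² | F_{j-1}])` with `c = l² / (2 (1 - lκ/3))`. Hence
`exp (∑ (l Y_j - c E[X_j² | F_{j-1}]))` has mean at most `1`, and Markov's inequality bounds the
probability that it reaches `e^L = 1/δ`, `L = log (1/δ)`. On the event of the theorem `Y_j = X_j`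
and `ν_n ≤ ν`, and `l` is chosen so that `l (√(2νL) + κL/3) - c ν = L`; so that event lies inside
the Markov event.
-/

open MeasureTheory ProbabilityTheory Real

namespace Real

theorem exp_le_one_add_add_sq_div_two_of_nonpos {x : ℝ} (hx : x ≤ 0) :
    exp x ≤ 1 + x + x ^ 2 / 2 := by
  have hderiv (y : ℝ) : HasDerivAt (fun y => 1 + y + y ^ 2 / 2 - exp y) (1 + y - exp y) y := by
    have := (((hasDerivAt_id' y).const_add 1).add ((hasDerivAt_pow 2 y).div_const 2)).sub
      (hasDerivAt_exp y)
    exact this.congr_deriv (by ring)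
  have hanti : Antitone fun y => 1 + y + y ^ 2 / 2 - exp y :=
    antitone_of_deriv_nonpos (fun y => (hderiv y).differentiableAt) fun y => by
      rw [(hderiv y).deriv]
      linarith [add_one_le_exp y]
  have := hanti hx
  simp only [exp_zero] at this
  linarith

/-- The Taylor tail of `exp` is dominated by the geometric series `x²/2 ∑ (b/3)ⁿ`, because
`2 · 3ⁿ ≤ (n + 2)!`. -/
theorem exp_le_one_add_add_sq_div_of_nonneg {x b : ℝ} (hx : 0 ≤ x) (hxb : x ≤ b) (hb : b < 3) :
    exp x ≤ 1 + x + x ^ 2 / (2 * (1 - b / 3)) := by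
  have hb0 : 0 ≤ b / 3 := by linarith
  have hb1 : b / 3 < 1 := by linarith
  have hterm (n : ℕ) : x ^ (n + 2) / (n + 2).factorial ≤ x ^ 2 / 2 * (b / 3) ^ n := by
    have hfact : (2 * 3 ^ n : ℝ) ≤ (n + 2).factorial := by
      have := Nat.factorial_mul_pow_le_factorial (m := 2) (n := n)
      rw [add_comm n 2]; exact_mod_cast this
    calc x ^ (n + 2) / (n + 2).factorial ≤ x ^ (n + 2) / (2 * 3 ^ n) :=
          div_le_div_of_nonneg_left (by positivity) (by positivity) hfact
      _ = x ^ 2 / 2 * (x / 3) ^ n := by rw [pow_add, div_pow]; ring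
      _ ≤ x ^ 2 / 2 * (b / 3) ^ n := by gcongr
  have hsum := summable_pow_div_factorial x
  calc exp x = ∑ i ∈ Finset.range 2, x ^ i / i.factorial
        + ∑' n : ℕ, x ^ (n + 2) / (n + 2).factorial := by
        rw [exp_eq_exp_ℝ, NormedSpace.exp_eq_tsum_div]
        exact (hsum.sum_add_tsum_nat_add 2).symm
    _ ≤ 1 + x + ∑' n : ℕ, x ^ 2 / 2 * (b / 3) ^ n := by
        refine add_le_add (by simp [Finset.sum_range_succ]) ?_
        exact Summable.tsum_le_tsum hterm ((summable_nat_add_iff 2).2 hsum)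
            ((summable_geometric_of_lt_one hb0 hb1).mul_left _)
    _ = 1 + x + x ^ 2 / (2 * (1 - b / 3)) := by
        rw [tsum_mul_left, tsum_geometric_of_lt_one hb0 hb1]
        field_simp

theorem exp_le_one_add_add_sq_div {x b : ℝ} (hxb : x ≤ b) (hb0 : 0 ≤ b) (hb : b < 3) :
    exp x ≤ 1 + x + x ^ 2 / (2 * (1 - b / 3)) := by
  rcases le_total x 0 with hx | hx
  · calc exp x ≤ 1 + x + x ^ 2 / 2 := exp_le_one_add_add_sq_div_two_of_nonpos hx
      _ ≤ 1 + x + x ^ 2 / (2 * (1 - b / 3)) := by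
        gcongr <;> linarith
  · exact exp_le_one_add_add_sq_div_of_nonneg hx hxb hb

theorem exp_mul_min_le {x κ l : ℝ} (hl : 0 ≤ l) (hκ : 0 ≤ κ) (hlκ : l * κ < 3) :
    exp (l * min x κ) ≤ 1 + l * min x κ + l ^ 2 / (2 * (1 - l * κ / 3)) * x ^ 2 := by
  have hsq : min x κ ^ 2 ≤ x ^ 2 := by
    rcases le_total x κ with h | h
    · rw [min_eq_left h]
    · rw [min_eq_right h]; exact pow_le_pow_left₀ hκ h 2
  have hden : 0 < 1 - l * κ / 3 := by linarith
  calc exp (l * min x κ) ≤ 1 + l * min x κ + (l * min x κ) ^ 2 / (2 * (1 - l * κ / 3)) :=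
        exp_le_one_add_add_sq_div (mul_le_mul_of_nonneg_left (min_le_right _ _) hl)
          (mul_nonneg hl hκ) hlκ
    _ = 1 + l * min x κ + l ^ 2 / (2 * (1 - l * κ / 3)) * min x κ ^ 2 := by ring
    _ ≤ 1 + l * min x κ + l ^ 2 / (2 * (1 - l * κ / 3)) * x ^ 2 := by gcongr

/-- With `a = √(2L/ν)` the exponent `l = a / (1 + κa/3)` gives `1 - lκ/3 = 1 / (1 + κa/3)`, and
`a √(2νL) = a² ν = 2L` makes the left-hand side collapse to `L`. -/
theorem exists_bernstein_exponent {ν κ L : ℝ} (hν : 0 < ν) (hκ : 0 ≤ κ) (hL : 0 < L) :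
    ∃ l : ℝ, 0 < l ∧ l * κ < 3 ∧
      l * (√(2 * ν * L) + κ * L / 3) - l ^ 2 / (2 * (1 - l * κ / 3)) * ν = L := by
  set a := √(2 * L / ν)
  have ha : 0 < a := sqrt_pos.2 (by positivity)
  have ha2 : a ^ 2 * ν = 2 * L := by
    rw [sq_sqrt (by positivity)]; field_simp
  have hsqrt : √(2 * ν * L) = a * ν := by
    rw [← sqrt_sq (mul_pos ha hν).le]
    congr 1
    linear_combination (-ν) * ha2
  refine ⟨a / (1 + κ * a / 3), by positivity, ?_, ?_⟩
  · rw [div_mul_eq_mul_div, div_lt_iff₀ (by positivity)]; nlinarith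
  · rw [hsqrt]
    field_simp
    nlinarith

end Real

section ConditionalExpectation

variable {Ω : Type*} {m m0 : MeasurableSpace Ω} {μ : Measure Ω}

lemma integrable_exp_of_ae_le [IsFiniteMeasure μ] {f : Ω → ℝ} (hf : AEMeasurable f μ) {C : ℝ}
    (hC : ∀ᵐ ω ∂μ, f ω ≤ C) : Integrable (fun ω => exp (f ω)) μ :=
  .of_bound hf.exp.aestronglyMeasurable (exp C) <| by
    filter_upwards [hC] with ω h
    rwa [norm_of_nonneg (exp_pos _).le, exp_le_exp]

theorem condExp_exp_mul_min_le [IsFiniteMeasure μ] (hm : m ≤ m0) {X : Ω → ℝ}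
    (hX : Integrable X μ) (hX2 : Integrable (fun ω => X ω ^ 2) μ) (hX0 : μ[X | m] ≤ᵐ[μ] 0)
    {l κ : ℝ} (hl : 0 ≤ l) (hκ : 0 ≤ κ) (hlκ : l * κ < 3) :
    μ[fun ω => exp (l * min (X ω) κ) | m] ≤ᵐ[μ]
      fun ω => exp (l ^ 2 / (2 * (1 - l * κ / 3)) * μ[fun ω => X ω ^ 2 | m] ω) := by
  set c := l ^ 2 / (2 * (1 - l * κ / 3))
  have hY : Integrable (fun ω => min (X ω) κ) μ := hX.inf (integrable_const κ)
  have hY0 : μ[fun ω => min (X ω) κ | m] ≤ᵐ[μ] 0 :=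
    (condExp_mono hY hX (ae_of_all _ fun ω => min_le_left _ _)).trans hX0
  have hexp : Integrable (fun ω => exp (l * min (X ω) κ)) μ :=
    integrable_exp_of_ae_le (hY.aemeasurable.const_mul l)
      (ae_of_all _ fun ω => mul_le_mul_of_nonneg_left (min_le_right _ _) hl)
  have hquad : Integrable (fun ω => 1 + l * min (X ω) κ + c * X ω ^ 2) μ :=
    ((integrable_const 1).add (hY.const_mul l)).add (hX2.const_mul c)
  have hlin : μ[fun ω => 1 + l * min (X ω) κ + c * X ω ^ 2 | m] =ᵐ[μ]
      fun ω => 1 + l * μ[fun ω => min (X ω) κ | m] ω + c * μ[fun ω => X ω ^ 2 | m] ω := by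
    filter_upwards [condExp_add ((integrable_const 1).add (hY.const_mul l)) (hX2.const_mul c) m,
      condExp_add (integrable_const 1) (hY.const_mul l) m, condExp_smul l (fun ω => min (X ω) κ) m,
      condExp_smul c (fun ω => X ω ^ 2) m] with ω h₁ h₂ h₃ h₄
    simp only [Pi.add_apply, Pi.smul_def, smul_eq_mul, condExp_const hm] at h₁ h₂ h₃ h₄
    rw [← h₃, ← h₄, ← h₂]
    exact h₁
  filter_upwards [condExp_mono hexp hquad (ae_of_all _ fun ω => exp_mul_min_le hl hκ hlκ),
    hlin, hY0] with ω h₁ h₂ h₃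
  calc _ ≤ _ := h₁
    _ = _ := h₂
    _ ≤ 1 + c * μ[fun ω => X ω ^ 2 | m] ω := by
        have : l * μ[fun ω => min (X ω) κ | m] ω ≤ 0 := mul_nonpos_of_nonneg_of_nonpos hl h₃
        linarith
    _ ≤ _ := by linarith [add_one_le_exp (c * μ[fun ω => X ω ^ 2 | m] ω)]

theorem integral_mul_le_of_condExp_le [IsFiniteMeasure μ] (hm : m ≤ m0) {F G H : Ω → ℝ}
    (hF : StronglyMeasurable[m] F) (hF0 : 0 ≤ᵐ[μ] F) {C : ℝ} (hFC : ∀ᵐ ω ∂μ, F ω ≤ C)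
    (hG : Integrable G μ) (hFH : Integrable (fun ω => F ω * H ω) μ) (hGH : μ[G | m] ≤ᵐ[μ] H) :
    ∫ ω, F ω * G ω ∂μ ≤ ∫ ω, F ω * H ω ∂μ := by
  have hFnorm : ∀ᵐ ω ∂μ, ‖F ω‖ ≤ C := by
    filter_upwards [hF0, hFC] with ω h₀ h₁
    rwa [norm_of_nonneg h₀]
  calc ∫ ω, F ω * G ω ∂μ = ∫ ω, μ[F * G | m] ω ∂μ := (integral_condExp hm).symm
    _ = ∫ ω, F ω * μ[G | m] ω ∂μ :=
        integral_congr_ae (condExp_stronglyMeasurable_mul_of_bound hm hF hG C hFnorm)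
    _ ≤ ∫ ω, F ω * H ω ∂μ := by
        refine integral_mono_ae (integrable_condExp.bdd_mul
          (hF.mono hm).aestronglyMeasurable hFnorm) hFH ?_
        filter_upwards [hF0, hGH] with ω h₀ h₁
        exact mul_le_mul_of_nonneg_left h₁ h₀

end ConditionalExpectation

section ExponentialSupermartingale

variable {Ω : Type*} {m0 : MeasurableSpace Ω} {μ : Measure Ω} {ℱ : Filtration ℕ m0}
  {D g : ℕ → Ω → ℝ} {b : ℝ}

lemma measurable_sum_Icc_sub (hD : ∀ j, Measurable[ℱ j] (D j))
    (hg : ∀ j, Measurable[ℱ (j - 1)] (g j)) (k : ℕ) :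
    Measurable[ℱ k] fun ω => ∑ j ∈ Finset.Icc 1 k, (D j ω - g j ω) :=
  Finset.measurable_sum _ fun j hj =>
    ((hD j).mono (ℱ.mono (Finset.mem_Icc.1 hj).2) le_rfl).sub
      ((hg j).mono (ℱ.mono (by grind)) le_rfl)

lemma ae_sum_Icc_sub_le (hDb : ∀ j ω, D j ω ≤ b) (hg0 : ∀ j, ∀ᵐ ω ∂μ, 0 ≤ g j ω) (k : ℕ) :
    ∀ᵐ ω ∂μ, ∑ j ∈ Finset.Icc 1 k, (D j ω - g j ω) ≤ k * b := by
  filter_upwards [ae_all_iff.2 hg0] with ω hω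
  calc ∑ j ∈ Finset.Icc 1 k, (D j ω - g j ω) ≤ ∑ j ∈ Finset.Icc 1 k, b :=
        Finset.sum_le_sum fun j _ => by linarith [hDb j ω, hω j]
    _ = k * b := by simp

lemma integrable_exp_sum_Icc_sub [IsFiniteMeasure μ] (hD : ∀ j, Measurable[ℱ j] (D j))
    (hDb : ∀ j ω, D j ω ≤ b) (hg : ∀ j, Measurable[ℱ (j - 1)] (g j))
    (hg0 : ∀ j, ∀ᵐ ω ∂μ, 0 ≤ g j ω) (k : ℕ) :
    Integrable (fun ω => exp (∑ j ∈ Finset.Icc 1 k, (D j ω - g j ω))) μ :=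
  integrable_exp_of_ae_le ((measurable_sum_Icc_sub hD hg k).mono (ℱ.le k) le_rfl).aemeasurable
    (ae_sum_Icc_sub_le hDb hg0 k)

theorem integral_exp_sum_Icc_sub_le_one [IsProbabilityMeasure μ] {n : ℕ}
    (hD : ∀ j, Measurable[ℱ j] (D j)) (hDb : ∀ j ω, D j ω ≤ b)
    (hg : ∀ j, Measurable[ℱ (j - 1)] (g j)) (hg0 : ∀ j, ∀ᵐ ω ∂μ, 0 ≤ g j ω)
    (hcond : ∀ j ∈ Finset.Icc 1 n,
      μ[fun ω => exp (D j ω) | ℱ (j - 1)] ≤ᵐ[μ] fun ω => exp (g j ω)) :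
    ∫ ω, exp (∑ j ∈ Finset.Icc 1 n, (D j ω - g j ω)) ∂μ ≤ 1 := by
  set S : ℕ → Ω → ℝ := fun k ω => ∑ j ∈ Finset.Icc 1 k, (D j ω - g j ω)
  suffices ∀ k ≤ n, ∫ ω, exp (S k ω) ∂μ ≤ 1 from this n le_rfl
  intro k
  induction k with
  | zero => simp [S]
  | succ k ih =>
    intro hk
    have hsplit (ω : Ω) : exp (S (k + 1) ω) = exp (S k ω - g (k + 1) ω) * exp (D (k + 1) ω) := by
      simp only [S, Finset.sum_Icc_succ_top (Nat.le_add_left 1 k), ← exp_add]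
      ring_nf
    calc ∫ ω, exp (S (k + 1) ω) ∂μ
        = ∫ ω, exp (S k ω - g (k + 1) ω) * exp (D (k + 1) ω) ∂μ := by simp_rw [hsplit]
      _ ≤ ∫ ω, exp (S k ω - g (k + 1) ω) * exp (g (k + 1) ω) ∂μ := by
        refine integral_mul_le_of_condExp_le (ℱ.le k)
          ((measurable_sum_Icc_sub hD hg k).sub (hg (k + 1))).exp.stronglyMeasurable
          (ae_of_all _ fun ω => (exp_pos _).le) (C := exp (k * b)) ?_ ?_ ?_
          (hcond (k + 1) (Finset.mem_Icc.2 ⟨Nat.le_add_left 1 k, hk⟩))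
        · filter_upwards [hg0 (k + 1), ae_sum_Icc_sub_le hDb hg0 k] with ω h₀ h₁
          exact exp_le_exp.2 (by linarith)
        · exact integrable_exp_of_ae_le ((hD (k + 1)).mono (ℱ.le _) le_rfl).aemeasurable
            (ae_of_all _ (hDb (k + 1)))
        · simpa only [← exp_add, sub_add_cancel] using
            integrable_exp_sum_Icc_sub hD hDb hg hg0 k
      _ = ∫ ω, exp (S k ω) ∂μ := by simp_rw [← exp_add, sub_add_cancel]
      _ ≤ 1 := ih (by omega)

theorem measure_le_sum_Icc_sub_le_exp_neg [IsProbabilityMeasure μ] {n : ℕ}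
    (hD : ∀ j, Measurable[ℱ j] (D j)) (hDb : ∀ j ω, D j ω ≤ b)
    (hg : ∀ j, Measurable[ℱ (j - 1)] (g j)) (hg0 : ∀ j, ∀ᵐ ω ∂μ, 0 ≤ g j ω)
    (hcond : ∀ j ∈ Finset.Icc 1 n,
      μ[fun ω => exp (D j ω) | ℱ (j - 1)] ≤ᵐ[μ] fun ω => exp (g j ω)) (L : ℝ) :
    μ {ω | L ≤ ∑ j ∈ Finset.Icc 1 n, (D j ω - g j ω)} ≤ ENNReal.ofReal (exp (-L)) := by
  rw [← ofReal_measureReal]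
  refine ENNReal.ofReal_le_ofReal ?_
  have hint := integrable_exp_sum_Icc_sub (μ := μ) hD hDb hg hg0 n
  calc μ.real {ω | L ≤ ∑ j ∈ Finset.Icc 1 n, (D j ω - g j ω)}
      ≤ exp (-1 * L) * mgf (fun ω => ∑ j ∈ Finset.Icc 1 n, (D j ω - g j ω)) μ 1 :=
        measure_ge_le_exp_mul_mgf L zero_le_one (by simpa only [one_mul] using hint)
    _ ≤ exp (-L) * 1 := by
        simp only [mgf, one_mul, neg_one_mul]
        gcongr
        exact integral_exp_sum_Icc_sub_le_one hD hDb hg hg0 hcond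
    _ = exp (-L) := mul_one _

end ExponentialSupermartingale

theorem measure_le_sum_min_sub_le_exp_neg {Ω : Type*} {m0 : MeasurableSpace Ω} {μ : Measure Ω}
    [IsProbabilityMeasure μ] {ℱ : Filtration ℕ m0} {n : ℕ} {X : ℕ → Ω → ℝ}
    (hadapt : ∀ j, Measurable[ℱ j] (X j)) (hint : ∀ j, Integrable (X j) μ)
    (hint2 : ∀ j, Integrable (fun ω => X j ω ^ 2) μ)
    (hmds : ∀ j ∈ Finset.Icc 1 n, μ[X j | ℱ (j - 1)] ≤ᵐ[μ] 0)
    {l κ : ℝ} (hl : 0 ≤ l) (hκ : 0 ≤ κ) (hlκ : l * κ < 3) (L : ℝ) :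
    μ {ω | L ≤ ∑ j ∈ Finset.Icc 1 n, (l * min (X j ω) κ -
      l ^ 2 / (2 * (1 - l * κ / 3)) * μ[fun ω' => X j ω' ^ 2 | ℱ (j - 1)] ω)} ≤
      ENNReal.ofReal (exp (-L)) := by
  have hc : 0 ≤ l ^ 2 / (2 * (1 - l * κ / 3)) := div_nonneg (sq_nonneg l) (by linarith)
  exact measure_le_sum_Icc_sub_le_exp_neg (b := l * κ)
    (fun j => ((hadapt j).min measurable_const).const_mul l)
    (fun j ω => mul_le_mul_of_nonneg_left (min_le_right _ _) hl)
    (fun j => stronglyMeasurable_condExp.measurable.const_mul _)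
    (fun j => (condExp_nonneg (ae_of_all _ fun ω => sq_nonneg (X j ω))).mono fun ω h =>
      mul_nonneg hc h)
    (fun j hj => condExp_exp_mul_min_le (ℱ.le _) (hint j) (hint2 j) (hmds j hj) hl hκ hlκ) L

theorem bernstein_martingale_general {Ω : Type*} {m0 : MeasurableSpace Ω}
    (μ : Measure Ω) [IsProbabilityMeasure μ] (ℱ : Filtration ℕ m0)
    (n : ℕ) (hn : 1 ≤ n) (X : ℕ → Ω → ℝ)
    (hadapt : ∀ j, Measurable[ℱ j] (X j))
    (hint : ∀ j, Integrable (X j) μ)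
    (hint2 : ∀ j, Integrable (fun ω => (X j ω) ^ 2) μ)
    (hmds : ∀ j ∈ Finset.Icc 1 n, μ[X j | ℱ (j - 1)] =ᵐ[μ] 0)
    (δ ν κ : ℝ) (hδ : 0 < δ) (hν : 0 < ν) (hκ : 0 < κ) :
    μ {ω | (Real.sqrt (2 * ν * Real.log (1 / δ)) + κ * Real.log (1 / δ) / 3 ≤
            ∑ j ∈ Finset.Icc 1 n, X j ω) ∧
        (∑ j ∈ Finset.Icc 1 n, (μ[fun ω' => (X j ω') ^ 2 | ℱ (j - 1)]) ω ≤ ν) ∧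
        ((Finset.Icc 1 n).sup' (Finset.nonempty_Icc.mpr hn) (fun j => X j ω) ≤ κ)} ≤
      ENNReal.ofReal δ := by
  rcases le_or_gt 1 δ with hδ1 | hδ1
  · exact prob_le_one.trans (ENNReal.one_le_ofReal.2 hδ1)
  set L := log (1 / δ)
  obtain ⟨l, hl, hlκ, hlL⟩ :=
    exists_bernstein_exponent hν hκ.le (log_pos ((one_lt_div hδ).2 hδ1))
  have htail := measure_le_sum_min_sub_le_exp_neg hadapt hint hint2
    (fun j hj => (hmds j hj).le) hl.le hκ.le hlκ L
  rw [show exp (-L) = δ by rw [← log_inv, one_div, inv_inv, exp_log hδ]] at htail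
  refine le_trans (measure_mono fun ω ⟨hS, hV, hK⟩ => ?_) htail
  have hmin : ∀ j ∈ Finset.Icc 1 n, min (X j ω) κ = X j ω := fun j hj =>
    min_eq_left ((Finset.le_sup' (fun j => X j ω) hj).trans hK)
  rw [Set.mem_ofPred_eq, Finset.sum_sub_distrib, ← Finset.mul_sum, ← Finset.mul_sum,
    Finset.sum_congr rfl hmin]
  have hc : 0 ≤ l ^ 2 / (2 * (1 - l * κ / 3)) := div_nonneg (sq_nonneg l) (by linarith)
  calc L = l * (√(2 * ν * L) + κ * L / 3) - l ^ 2 / (2 * (1 - l * κ / 3)) * ν := hlL.symm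
    _ ≤ _ := by gcongr

/-- Bernstein's inequality for martingales: for a martingale difference sequence
`X_1, …, X_n` (each bounded above), with `S_n = ∑ X_j`,
`ν_n = ∑ E[X_j² | F_{j-1}]` and `κ_n = max_j X_j`, for any `δ, ν, κ > 0`,
`P(S_n ≥ √(2ν ln(1/δ)) + κ ln(1/δ)/3 ∧ ν_n ≤ ν ∧ κ_n ≤ κ) ≤ δ`. -/
theorem bernstein_martingale {Ω : Type*} {m0 : MeasurableSpace Ω}
    (μ : Measure Ω) [IsProbabilityMeasure μ] (ℱ : Filtration ℕ m0)
    (n : ℕ) (hn : 1 ≤ n) (X : ℕ → Ω → ℝ)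
    (hadapt : ∀ j, Measurable[ℱ j] (X j))
    (hint : ∀ j, Integrable (X j) μ)
    (hint2 : ∀ j, Integrable (fun ω => (X j ω) ^ 2) μ)
    (hmds : ∀ j ∈ Finset.Icc 1 n, μ[X j | ℱ (j - 1)] =ᵐ[μ] 0)
    (hbdd : ∃ C : ℝ, ∀ j ω, X j ω ≤ C)
    (δ ν κ : ℝ) (hδ : 0 < δ) (hν : 0 < ν) (hκ : 0 < κ) :
    μ {ω | (Real.sqrt (2 * ν * Real.log (1 / δ)) + κ * Real.log (1 / δ) / 3 ≤
            ∑ j ∈ Finset.Icc 1 n, X j ω) ∧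
        (∑ j ∈ Finset.Icc 1 n, (μ[fun ω' => (X j ω') ^ 2 | ℱ (j - 1)]) ω ≤ ν) ∧
        ((Finset.Icc 1 n).sup' (Finset.nonempty_Icc.mpr hn) (fun j => X j ω) ≤ κ)} ≤
      ENNReal.ofReal δ :=
  bernstein_martingale_general μ ℱ n hn X hadapt hint hint2 hmds δ ν κ hδ hν hκ
end
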